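/- arXiv:1106.2414 — 2 statements merged into one kernel-verified Lean document; each statement's English description precedes it below -/
import Mathlib

section
/- With the same setup (cop sweeping the path $P_n$ from vertex 0, drunk robber starting uniformly at random), there is a constant $C$ such that for all $n \ge 2$, $\mathbb{E}T_n \ge \frac{n}{2}\left(1 - C\frac{\log n}{n}\right)$. Consequently $\mathbb{E}T_n = (1+o(1)) n/2$. -/
/-!
Let `Z t` be the distance from the cop (at vertex `t`) to the robber. A round is *closing* if
the robber steps towards the cop, because his coin says so or because he is stuck at the far end
`n - 1`; then `Z` drops by 2, otherwise it stays. As `Z` lands in `{-1, 0}` at capture, the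
number `N` of closing rounds before capture satisfies `K ≤ 2N ≤ K + 1`, so
`2𝔼N = 𝔼K + O(1) = n/2 + O(1)`. On the other hand a surviving round is closing with probability
`1/2` (the coin is fair and independent of the past) plus at most the probability that the
robber is at the far end, and the latter is at most `1/n` at all times: his distance to the far
end is a walk reflected at `0` started uniformly on `n` sites. Summing over the at most `n`
rounds, `𝔼T = 2𝔼N + O(1) = n/2 + O(1)`.
-/

open MeasureTheory ProbabilityTheory Finset Filter
open scoped ENNReal

theorem ProbabilityTheory.indep_sup_left_of_indep_sup {Ω : Type*}
    {m₀ m₁ m₂ mΩ : MeasurableSpace Ω} {μ : Measure Ω} [IsZeroOrProbabilityMeasure μ]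
    (h₀ : m₀ ≤ mΩ) (h₁ : m₁ ≤ mΩ) (h₂ : m₂ ≤ mΩ)
    (h₀₁₂ : Indep m₀ (m₁ ⊔ m₂) μ) (h₁₂ : Indep m₁ m₂ μ) : Indep (m₀ ⊔ m₁) m₂ μ := by
  rw [Indep_iff] at h₀₁₂ h₁₂
  have h₁_le : m₁ ≤ m₁ ⊔ m₂ := le_sup_left
  refine IndepSets.indep (sup_le h₀ h₁) h₂
    (p1 := Set.image2 (· ∩ ·) {s | MeasurableSet[m₀] s} {s | MeasurableSet[m₁] s})
    (p2 := {s | MeasurableSet[m₂] s}) ?_ (@MeasurableSpace.isPiSystem_measurableSet Ω m₂) ?_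
    (@MeasurableSpace.generateFrom_measurableSet Ω m₂).symm ?_
  · rintro _ ⟨a, ha, b, hb, rfl⟩ _ ⟨a', ha', b', hb', rfl⟩ -
    exact ⟨a ∩ a', ha.inter ha', b ∩ b', hb.inter hb',
      (Set.inter_inter_inter_comm a b a' b').symm⟩
  · refine le_antisymm (sup_le ?_ ?_) (MeasurableSpace.generateFrom_le ?_)
    · exact fun s hs => MeasurableSpace.measurableSet_generateFrom
        ⟨s, hs, Set.univ, MeasurableSet.univ, Set.inter_univ s⟩
    · exact fun s hs => MeasurableSpace.measurableSet_generateFrom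
        ⟨Set.univ, MeasurableSet.univ, s, hs, Set.univ_inter s⟩
    · rintro _ ⟨a, ha, b, hb, rfl⟩
      exact MeasurableSet.inter (le_sup_left (b := m₁) a ha) (le_sup_right (a := m₀) b hb)
  · rw [IndepSets_iff]
    rintro _ c ⟨a, ha, b, hb, rfl⟩ hc
    rw [Set.inter_assoc, h₀₁₂ a (b ∩ c) ha ((h₁_le b hb).inter (le_sup_right (a := m₁) c hc)),
      h₁₂ b c hb hc, h₀₁₂ a b ha (h₁_le b hb), mul_assoc]

namespace PathSweep

variable {Ω : Type*}

structure IsGapProcess (n : ℕ) (K : Ω → ℕ) (ξ : ℕ → Ω → Bool) (Z : ℕ → Ω → ℤ) : Prop where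
  zero : ∀ ω, Z 0 ω = K ω
  succ : ∀ t ω, Z (t + 1) ω =
    if Z t ω = (n : ℤ) - 1 - t then Z t ω - 2 else if ξ t ω then Z t ω - 2 else Z t ω

/-- The robber's distance to the far end `n - 1` of the path: he stands at vertex `t + Z t ω`. -/
def endDist (n : ℕ) (Z : ℕ → Ω → ℤ) (t : ℕ) (ω : Ω) : ℤ := n - 1 - t - Z t ω

def closingSet (n : ℕ) (ξ : ℕ → Ω → Bool) (Z : ℕ → Ω → ℤ) (t : ℕ) : Set Ω :=
  {ω | endDist n Z t ω = 0 ∨ ξ t ω = true}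

def survivalSet (Z : ℕ → Ω → ℤ) (t : ℕ) : Set Ω := {ω | ∀ s ≤ t, 0 < Z s ω}

noncomputable def closingCount (n : ℕ) (ξ : ℕ → Ω → Bool) (Z : ℕ → Ω → ℤ) (ω : Ω) : ℕ :=
  ∑ t ∈ range n, (survivalSet Z t ∩ closingSet n ξ Z t).indicator 1 ω

abbrev history (K : Ω → ℕ) (ξ : ℕ → Ω → Bool) (t : ℕ) : MeasurableSpace Ω :=
  MeasurableSpace.comap K inferInstance ⊔
    ⨆ i ∈ Set.Iio t, MeasurableSpace.comap (ξ i) inferInstance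

variable {n : ℕ} {K : Ω → ℕ} {ξ : ℕ → Ω → Bool} {Z : ℕ → Ω → ℤ}

lemma closingCount_eq_sum_range {ω : Ω} {τ : ℕ} (hτn : τ ≤ n)
    (hτ : ∀ t, ω ∈ survivalSet Z t ↔ t < τ) :
    closingCount n ξ Z ω = ∑ t ∈ range τ, (closingSet n ξ Z t).indicator 1 ω := by
  rw [closingCount, ← sum_range_add_sum_Ico _ hτn, sum_eq_zero (s := Ico τ n), add_zero]
  · refine sum_congr rfl fun t ht => ?_
    have hs : ω ∈ survivalSet Z t := (hτ t).2 (mem_range.1 ht)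
    by_cases hc : ω ∈ closingSet n ξ Z t <;> simp [hs, hc]
  · intro t ht
    have hs : ω ∉ survivalSet Z t := fun h => by have := (hτ t).1 h; simp at ht; omega
    simp [hs]

namespace IsGapProcess

variable (hZ : IsGapProcess n K ξ Z)
include hZ

lemma succ_eq (t : ℕ) (ω : Ω) :
    Z (t + 1) ω = Z t ω - 2 * ((closingSet n ξ Z t).indicator 1 ω : ℕ) := by
  rw [hZ.succ t ω]
  by_cases hw : Z t ω = (n : ℤ) - 1 - t
  · simp [closingSet, endDist, hw]
  · have hd : (n : ℤ) - 1 - t - Z t ω ≠ 0 := by omega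
    by_cases hξ : ξ t ω = true <;> simp [closingSet, endDist, hw, hξ, hd]

lemma endDist_succ (t : ℕ) (ω : Ω) : endDist n Z (t + 1) ω =
    endDist n Z t ω - 1 + 2 * ((closingSet n ξ Z t).indicator 1 ω : ℕ) := by
  simp only [endDist, hZ.succ_eq t ω]
  push_cast
  ring

lemma endDist_succ_of_mem {t : ℕ} {ω : Ω} (hc : ω ∈ closingSet n ξ Z t) :
    endDist n Z (t + 1) ω = endDist n Z t ω + 1 := by
  simp [hZ.endDist_succ t ω, hc]
  ring

lemma endDist_succ_of_notMem {t : ℕ} {ω : Ω} (hc : ω ∉ closingSet n ξ Z t) :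
    endDist n Z (t + 1) ω = endDist n Z t ω - 1 ∧ endDist n Z t ω ≠ 0 ∧ ξ t ω = false := by
  simp only [closingSet, Set.mem_ofPred_eq, not_or, Bool.not_eq_true] at hc
  refine ⟨?_, hc⟩
  simp [hZ.endDist_succ t ω, closingSet, hc]

lemma endDist_nonneg (hKlt : ∀ ω, K ω < n) (t : ℕ) (ω : Ω) : 0 ≤ endDist n Z t ω := by
  induction t with
  | zero => simp only [endDist, hZ.zero ω]; have := hKlt ω; push_cast; omega
  | succ t ih =>
    by_cases hc : ω ∈ closingSet n ξ Z t
    · rw [hZ.endDist_succ_of_mem hc]; omega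
    · obtain ⟨h, h0, -⟩ := hZ.endDist_succ_of_notMem hc; omega

lemma eq_sub_two_mul_sum (m : ℕ) (ω : Ω) :
    Z m ω = K ω - 2 * ((∑ t ∈ range m, (closingSet n ξ Z t).indicator 1 ω : ℕ) : ℤ) := by
  induction m with
  | zero => simp [hZ.zero ω]
  | succ m ih => rw [sum_range_succ, hZ.succ_eq m ω, ih]; push_cast; ring

lemma neg_one_le_of_forall_lt {m : ℕ} {ω : Ω} (h : ∀ s < m, 0 < Z s ω) : -1 ≤ Z m ω := by
  cases m with
  | zero => rw [hZ.zero ω]; omega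
  | succ m =>
    have := h m (Nat.lt_succ_self m)
    rw [hZ.succ_eq m ω]
    by_cases hc : ω ∈ closingSet n ξ Z m <;> simp [hc] <;> omega

lemma exists_captureTime (hKlt : ∀ ω, K ω < n) (ω : Ω) :
    ∃ τ ≤ n - 1, (∀ t, ω ∈ survivalSet Z t ↔ t < τ) ∧ -1 ≤ Z τ ω ∧ Z τ ω ≤ 0 := by
  classical
  have hend : Z (n - 1) ω ≤ 0 := by
    have h1 := hZ.endDist_nonneg hKlt (n - 1) ω
    have h2 : 1 ≤ n := by have := hKlt ω; omega
    simp only [endDist] at h1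
    push_cast [h2] at h1
    omega
  have hex : ∃ t, Z t ω ≤ 0 := ⟨n - 1, hend⟩
  refine ⟨Nat.find hex, Nat.find_min' hex hend, fun t => ?_, ?_, Nat.find_spec hex⟩
  · simp only [survivalSet, Set.mem_ofPred_eq, Nat.lt_find_iff, not_le]
  · exact hZ.neg_one_le_of_forall_lt fun s hs => not_le.mp (Nat.find_min hex hs)

lemma closingCount_bounds (hKlt : ∀ ω, K ω < n) (ω : Ω) :
    K ω ≤ 2 * closingCount n ξ Z ω ∧ 2 * closingCount n ξ Z ω ≤ K ω + 1 := by
  obtain ⟨τ, hτn, hτ, hlo, hhi⟩ := hZ.exists_captureTime hKlt ω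
  have htel := hZ.eq_sub_two_mul_sum τ ω
  rw [← closingCount_eq_sum_range (hτn.trans (Nat.sub_le n 1)) hτ] at htel
  omega

end IsGapProcess

lemma history_mono : Monotone (history K ξ) := fun _ _ hst =>
  sup_le_sup_left (biSup_mono fun _ hi => lt_of_lt_of_le hi hst) _

lemma comap_le_history_succ (t : ℕ) :
    MeasurableSpace.comap (ξ t) inferInstance ≤ history K ξ (t + 1) :=
  le_sup_of_le_right <| le_biSup (fun i => MeasurableSpace.comap (ξ i) inferInstance)
    (Set.mem_Iio.2 t.lt_succ_self)

namespace IsGapProcess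

variable (hZ : IsGapProcess n K ξ Z)
include hZ

lemma measurable_history (t : ℕ) : Measurable[history K ξ t] (Z t) := by
  induction t with
  | zero =>
    rw [show Z 0 = fun ω => (K ω : ℤ) from funext hZ.zero]
    exact measurable_from_top.comp ((comap_measurable K).mono le_sup_left le_rfl)
  | succ t ih =>
    have hZt := ih.mono (history_mono t.le_succ) le_rfl
    have hξt : Measurable[history K ξ (t + 1)] (ξ t) :=
      (comap_measurable (ξ t)).mono (comap_le_history_succ t) le_rfl
    rw [show Z (t + 1) = _ from funext (hZ.succ t)]
    exact Measurable.ite (hZt (measurableSet_singleton _)) (hZt.sub_const 2)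
      (Measurable.ite (hξt (measurableSet_singleton true)) (hZt.sub_const 2) hZt)

lemma measurableSet_survivalSet (t : ℕ) :
    MeasurableSet[history K ξ t] (survivalSet Z t) := by
  have : survivalSet Z t = ⋂ s ∈ Set.Iic t, Z s ⁻¹' Set.Ioi 0 := by
    ext ω; simp [survivalSet]
  rw [this]
  exact .biInter (Set.to_countable _) fun s hs =>
    (hZ.measurable_history s).mono (history_mono hs) le_rfl measurableSet_Ioi

lemma measurableSet_endDist_eq (t : ℕ) (x : ℤ) :
    MeasurableSet[history K ξ t] {ω | endDist n Z t ω = x} :=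
  (hZ.measurable_history t).const_sub _ (measurableSet_singleton x)

lemma measurableSet_closingSet (t : ℕ) :
    MeasurableSet[history K ξ (t + 1)] (closingSet n ξ Z t) :=
  (history_mono t.le_succ _ (hZ.measurableSet_endDist_eq t 0)).union
    (comap_le_history_succ t _ ⟨{true}, measurableSet_singleton true, rfl⟩)

end IsGapProcess

variable [mΩ : MeasurableSpace Ω]

lemma history_le (hK : Measurable K) (hξ : ∀ i, Measurable (ξ i)) (t : ℕ) :
    history K ξ t ≤ mΩ :=
  sup_le hK.comap_le (iSup₂_le fun i _ => (hξ i).comap_le)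

variable {μ : Measure Ω}

lemma indep_history_coin [IsProbabilityMeasure μ] (hK : Measurable K)
    (hξ : ∀ i, Measurable (ξ i)) (hξi : iIndepFun ξ μ)
    (hKξ : IndepFun K (fun ω i => ξ i ω) μ) (t : ℕ) :
    Indep (history K ξ t) (MeasurableSpace.comap (ξ t) inferInstance) μ := by
  have hcoin (i : ℕ) : MeasurableSpace.comap (ξ i) inferInstance ≤
      MeasurableSpace.comap (fun ω j => ξ j ω) inferInstance := by
    rw [show ξ i = (fun v : ℕ → Bool => v i) ∘ fun ω j => ξ j ω from rfl,
      ← MeasurableSpace.comap_comp]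
    exact MeasurableSpace.comap_mono (measurable_pi_apply i).comap_le
  have hpast := indep_iSup_of_disjoint (fun i => (hξ i).comap_le)
    ((iIndepFun_iff_iIndep _ _ _).1 hξi) (S := Set.Iio t) (T := {t}) (by simp)
  rw [_root_.iSup_singleton] at hpast
  refine indep_sup_left_of_indep_sup hK.comap_le (iSup₂_le fun i _ => (hξ i).comap_le)
    (hξ t).comap_le ?_ hpast
  exact indep_of_indep_of_le_right ((IndepFun_iff_Indep _ _ _).1 hKξ)
    (sup_le (iSup₂_le fun i _ => hcoin i) (hcoin t))

def FairGivenHistory (μ : Measure Ω) (K : Ω → ℕ) (ξ : ℕ → Ω → Bool) : Prop :=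
  ∀ t A, MeasurableSet[history K ξ t] A → ∀ b, μ (A ∩ {ω | ξ t ω = b}) = μ A / 2

lemma fairGivenHistory [IsProbabilityMeasure μ] (hK : Measurable K)
    (hξ : ∀ i, Measurable (ξ i)) (hξi : iIndepFun ξ μ)
    (hKξ : IndepFun K (fun ω i => ξ i ω) μ) (hfair : ∀ i, μ {ω | ξ i ω = true} = 1 / 2) :
    FairGivenHistory μ K ξ := by
  intro t A hA b
  have hb : μ {ω | ξ t ω = b} = 2⁻¹ := by
    cases b
    · have hm : MeasurableSet {ω | ξ t ω = true} := hξ t (measurableSet_singleton true)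
      have : {ω | ξ t ω = false} = {ω | ξ t ω = true}ᶜ := by ext; simp
      rw [this, prob_compl_eq_one_sub hm, hfair t, one_div, ENNReal.one_sub_inv_two]
    · simpa using hfair t
  have hprod := (Indep_iff _ _ _).1 (indep_history_coin hK hξ hξi hKξ t) A {ω | ξ t ω = b} hA
    ⟨{b}, measurableSet_singleton b, rfl⟩
  rw [hprod, hb, div_eq_mul_inv]

lemma measure_eq_le_inv (hKlt : ∀ ω, K ω < n)
    (hunif : ∀ j < n, μ {ω | K ω = j} = (n : ℝ≥0∞)⁻¹) (j : ℕ) :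
    μ {ω | K ω = j} ≤ (n : ℝ≥0∞)⁻¹ := by
  by_cases hj : j < n
  · exact (hunif j hj).le
  · have : {ω | K ω = j} = ∅ := by ext ω; have := hKlt ω; simp; omega
    simp [this]

lemma lintegral_natCast_of_uniform [IsProbabilityMeasure μ] (hK : Measurable K)
    (hKlt : ∀ ω, K ω < n) (hunif : ∀ j < n, μ {ω | K ω = j} = (n : ℝ≥0∞)⁻¹) :
    ∫⁻ ω, (K ω : ℝ≥0∞) ∂μ = ENNReal.ofReal ((n - 1) / 2) := by
  have hn : (0 : ℝ) < n := by
    exact_mod_cast Nat.zero_lt_of_lt (hKlt (nonempty_of_isProbabilityMeasure μ).some)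
  have hKj (j : ℕ) : MeasurableSet {ω | K ω = j} := hK (measurableSet_singleton j)
  have hpt (ω : Ω) : (K ω : ℝ≥0∞) =
      ∑ j ∈ range n, {ω | K ω = j}.indicator (fun _ => (j : ℝ≥0∞)) ω := by
    rw [sum_eq_single_of_mem (K ω) (mem_range.2 (hKlt ω)) fun j _ hj => ?_]
    · simp
    · exact Set.indicator_of_notMem (Ne.symm hj) _
  have hgauss (m : ℕ) : ∑ j ∈ range m, (j : ℝ) = m * (m - 1) / 2 := by
    induction m with
    | zero => simp
    | succ m ih => rw [sum_range_succ, ih]; push_cast; ring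
  rw [lintegral_congr hpt, lintegral_finsetSum _ fun j _ => measurable_const.indicator (hKj j)]
  calc ∑ j ∈ range n, ∫⁻ ω, {ω | K ω = j}.indicator (fun _ => (j : ℝ≥0∞)) ω ∂μ
      = ∑ j ∈ range n, ENNReal.ofReal (j * (n : ℝ)⁻¹) := by
        refine sum_congr rfl fun j hj => ?_
        rw [lintegral_indicator_const (hKj j), hunif j (mem_range.1 hj),
          ENNReal.ofReal_mul (Nat.cast_nonneg j), ENNReal.ofReal_natCast,
          ENNReal.ofReal_inv_of_pos hn, ENNReal.ofReal_natCast]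
    _ = ENNReal.ofReal ((n - 1) / 2) := by
        rw [← ENNReal.ofReal_sum_of_nonneg fun j _ => by positivity, ← sum_mul, hgauss]
        congr 1
        field_simp

lemma lintegral_closingCount (hK : Measurable K) (hξ : ∀ i, Measurable (ξ i))
    (hZ : IsGapProcess n K ξ Z) :
    ∫⁻ ω, (closingCount n ξ Z ω : ℝ≥0∞) ∂μ =
      ∑ t ∈ range n, μ (survivalSet Z t ∩ closingSet n ξ Z t) := by
  have hmeas (t : ℕ) : MeasurableSet (survivalSet Z t ∩ closingSet n ξ Z t) :=
    (history_le hK hξ t _ (hZ.measurableSet_survivalSet t)).inter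
      (history_le hK hξ (t + 1) _ (hZ.measurableSet_closingSet t))
  have hpt (ω : Ω) : (closingCount n ξ Z ω : ℝ≥0∞) =
      ∑ t ∈ range n, (survivalSet Z t ∩ closingSet n ξ Z t).indicator 1 ω := by
    rw [closingCount, Nat.cast_sum]
    refine sum_congr rfl fun t _ => ?_
    by_cases h : ω ∈ survivalSet Z t ∩ closingSet n ξ Z t <;> simp [h]
  rw [lintegral_congr hpt,
    lintegral_finsetSum _ fun t _ => by exact measurable_const.indicator (hmeas t)]
  exact sum_congr rfl fun t _ => lintegral_indicator_one (hmeas t)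

namespace IsGapProcess

variable (hZ : IsGapProcess n K ξ Z) (hKlt : ∀ ω, K ω < n)
  (hunif : ∀ j < n, μ {ω | K ω = j} = (n : ℝ≥0∞)⁻¹) (hfair : FairGivenHistory μ K ξ)
include hZ hKlt hunif hfair

/-- Doubling the mass at `0` makes one step of the reflected walk an average of neighbouring
masses, which is why these two bounds propagate. -/
lemma measure_endDist_le (t : ℕ) :
    μ {ω | endDist n Z t ω = 0} ≤ (n : ℝ≥0∞)⁻¹ ∧
      ∀ x, μ {ω | endDist n Z t ω = x} ≤ 2 * (n : ℝ≥0∞)⁻¹ := by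
  induction t with
  | zero =>
    have h0 (x : ℤ) : μ {ω | endDist n Z 0 ω = x} ≤ (n : ℝ≥0∞)⁻¹ := by
      refine (measure_mono fun ω hω => ?_).trans (measure_eq_le_inv hKlt hunif (n - 1 - x).toNat)
      simp only [endDist, hZ.zero ω, Set.mem_ofPred_eq] at hω ⊢
      omega
    exact ⟨h0 0, fun x => (h0 x).trans (le_mul_of_one_le_left' one_le_two)⟩
  | succ t ih =>
    have hhalf (x : ℤ) (b : Bool) :
        μ ({ω | endDist n Z t ω = x} ∩ {ω | ξ t ω = b}) ≤ (n : ℝ≥0∞)⁻¹ := by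
      rw [hfair t _ (hZ.measurableSet_endDist_eq t x) b]
      exact ENNReal.div_le_of_le_mul' (ih.2 x)
    have hup (y : ℤ) :
        μ ({ω | endDist n Z t ω = y} ∩ closingSet n ξ Z t) ≤ (n : ℝ≥0∞)⁻¹ := by
      by_cases hy : y = 0
      · exact (measure_mono Set.inter_subset_left).trans (hy ▸ ih.1)
      · convert hhalf y true using 2
        ext ω
        simp only [closingSet, Set.mem_inter_iff, Set.mem_ofPred_eq]
        constructor <;> rintro ⟨h, h'⟩ <;> simp_all
    refine ⟨(measure_mono fun ω hω => ?_).trans (hhalf 1 false),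
      fun x => (measure_mono fun ω hω => ?_).trans <| (measure_union_le _ _).trans <|
        (add_le_add (hup (x - 1)) (hhalf (x + 1) false)).trans_eq (two_mul _).symm⟩
    · have hnn := hZ.endDist_nonneg hKlt t ω
      by_cases hc : ω ∈ closingSet n ξ Z t
      · simp only [Set.mem_ofPred_eq, hZ.endDist_succ_of_mem hc] at hω; omega
      · obtain ⟨h, -, hξ⟩ := hZ.endDist_succ_of_notMem hc
        simp only [Set.mem_ofPred_eq, h] at hω
        exact ⟨by simp only [Set.mem_ofPred_eq]; omega, hξ⟩
    · by_cases hc : ω ∈ closingSet n ξ Z t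
      · simp only [Set.mem_ofPred_eq, hZ.endDist_succ_of_mem hc] at hω
        exact Or.inl ⟨by simp only [Set.mem_ofPred_eq]; omega, hc⟩
      · obtain ⟨h, -, hξ⟩ := hZ.endDist_succ_of_notMem hc
        simp only [Set.mem_ofPred_eq, h] at hω
        exact Or.inr ⟨by simp only [Set.mem_ofPred_eq]; omega, hξ⟩

lemma measure_survivalSet_inter_closingSet (t : ℕ) :
    μ (survivalSet Z t) / 2 ≤ μ (survivalSet Z t ∩ closingSet n ξ Z t) ∧
      μ (survivalSet Z t ∩ closingSet n ξ Z t) ≤ μ (survivalSet Z t) / 2 + (n : ℝ≥0∞)⁻¹ := by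
  have hhalf := hfair t _ (hZ.measurableSet_survivalSet t) true
  refine ⟨hhalf ▸ measure_mono (Set.inter_subset_inter_right _ fun ω h => Or.inr h), ?_⟩
  calc μ (survivalSet Z t ∩ closingSet n ξ Z t)
      ≤ μ (survivalSet Z t ∩ {ω | ξ t ω = true} ∪ {ω | endDist n Z t ω = 0}) :=
        measure_mono fun ω ⟨hs, hc⟩ => hc.elim Or.inr fun h => Or.inl ⟨hs, h⟩
    _ ≤ μ (survivalSet Z t) / 2 + (n : ℝ≥0∞)⁻¹ := by
        rw [← hhalf]
        exact (measure_union_le _ _).trans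
          (add_le_add_right (hZ.measure_endDist_le hKlt hunif hfair t).1 _)

variable [IsProbabilityMeasure μ] (hK : Measurable K) (hξ : ∀ i, Measurable (ξ i))
include hK hξ

lemma lintegral_le_tsum_add_two_and_tsum_le_lintegral_add_one :
    ∫⁻ ω, (K ω : ℝ≥0∞) ∂μ ≤ ∑' t, μ (survivalSet Z t) + 2 ∧
      ∑' t, μ (survivalSet Z t) ≤ ∫⁻ ω, (K ω : ℝ≥0∞) ∂μ + 1 := by
  have hET : ∑' t, μ (survivalSet Z t) = ∑ t ∈ range n, μ (survivalSet Z t) := by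
    refine tsum_eq_sum fun t ht => ?_
    have : survivalSet Z t = ∅ := by
      ext ω
      obtain ⟨τ, hτn, hτ, -⟩ := hZ.exists_captureTime hKlt ω
      simp only [Set.mem_empty_iff_false, iff_false, hτ]
      simp only [mem_range, not_lt] at ht
      omega
    simp [this]
  have hN (ω : Ω) : (K ω : ℝ≥0∞) ≤ 2 * closingCount n ξ Z ω ∧
      2 * (closingCount n ξ Z ω : ℝ≥0∞) ≤ K ω + 1 := by
    obtain ⟨h1, h2⟩ := hZ.closingCount_bounds hKlt ω
    exact ⟨by exact_mod_cast h1, by exact_mod_cast h2⟩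
  have hEN := lintegral_closingCount (μ := μ) hK hξ hZ
  have hb := hZ.measure_survivalSet_inter_closingSet hKlt hunif hfair
  have hwall : 2 * ∑ _t ∈ range n, (n : ℝ≥0∞)⁻¹ ≤ 2 := by
    rw [sum_const, card_range, nsmul_eq_mul]
    exact mul_le_of_le_one_right' (ENNReal.mul_inv_le_one _)
  have hhalves : ∑ t ∈ range n, μ (survivalSet Z t) =
      2 * ∑ t ∈ range n, μ (survivalSet Z t) / 2 := by
    rw [mul_sum]
    exact sum_congr rfl fun t _ => by
      rw [mul_comm, ENNReal.div_mul_cancel two_ne_zero ENNReal.ofNat_ne_top]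
  constructor
  · calc ∫⁻ ω, (K ω : ℝ≥0∞) ∂μ ≤ ∫⁻ ω, 2 * (closingCount n ξ Z ω : ℝ≥0∞) ∂μ :=
          lintegral_mono fun ω => (hN ω).1
      _ = 2 * ∑ t ∈ range n, μ (survivalSet Z t ∩ closingSet n ξ Z t) := by
          rw [lintegral_const_mul' _ _ ENNReal.ofNat_ne_top, hEN]
      _ ≤ 2 * ∑ t ∈ range n, (μ (survivalSet Z t) / 2 + (n : ℝ≥0∞)⁻¹) := by
          gcongr with t; exact (hb t).2
      _ = ∑ t ∈ range n, μ (survivalSet Z t) + 2 * ∑ _t ∈ range n, (n : ℝ≥0∞)⁻¹ := by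
          rw [sum_add_distrib, mul_add, hhalves]
      _ ≤ ∑' t, μ (survivalSet Z t) + 2 := by rw [hET]; gcongr
  · calc ∑' t, μ (survivalSet Z t) = 2 * ∑ t ∈ range n, μ (survivalSet Z t) / 2 := by
          rw [hET, hhalves]
      _ ≤ 2 * ∑ t ∈ range n, μ (survivalSet Z t ∩ closingSet n ξ Z t) := by
          gcongr with t; exact (hb t).1
      _ = ∫⁻ ω, 2 * (closingCount n ξ Z ω : ℝ≥0∞) ∂μ := by
          rw [lintegral_const_mul' _ _ ENNReal.ofNat_ne_top, hEN]
      _ ≤ ∫⁻ ω, ((K ω : ℝ≥0∞) + 1) ∂μ := lintegral_mono fun ω => (hN ω).2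
      _ = ∫⁻ ω, (K ω : ℝ≥0∞) ∂μ + 1 := by
          rw [lintegral_add_right _ measurable_const, lintegral_const, measure_univ, mul_one]

theorem tsum_ne_top_and_abs_toReal_sub_le :
    ∑' t, μ (survivalSet Z t) ≠ ∞ ∧ |(∑' t, μ (survivalSet Z t)).toReal - n / 2| ≤ 5 / 2 := by
  obtain ⟨hlo, hhi⟩ :=
    hZ.lintegral_le_tsum_add_two_and_tsum_le_lintegral_add_one hKlt hunif hfair hK hξ
  rw [lintegral_natCast_of_uniform hK hKlt hunif] at hlo hhi
  have hn : (1 : ℝ) ≤ n := by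
    exact_mod_cast Nat.one_le_of_lt (hKlt (nonempty_of_isProbabilityMeasure μ).some)
  have hfin : ∑' t, μ (survivalSet Z t) ≠ ∞ := ne_top_of_le_ne_top (by simp) hhi
  refine ⟨hfin, abs_le.2 ⟨?_, ?_⟩⟩
  · have := (ENNReal.ofReal_le_iff_le_toReal (by simpa using hfin)).1 hlo
    rw [ENNReal.toReal_add hfin (by simp)] at this
    norm_num at this
    linarith
  · have := ENNReal.toReal_mono (by simp) hhi
    rw [ENNReal.toReal_add (by simp) (by simp), ENNReal.toReal_ofReal (by linarith)] at this
    norm_num at this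
    linarith

end IsGapProcess

end PathSweep

open PathSweep in
/-- for the cop sweeping the path `P_n` from vertex `0` against a drunk robber
started uniformly at random (setup as in Statement 9, with the distance process `Z`),
there is a constant `C` such that for all `n ≥ 2` the expected capture time satisfies
`𝔼 T_n ≥ (n/2)(1 - C log n / n)`; consequently, for any family of such models,
`𝔼 T_n = (1+o(1)) n/2`. -/
theorem path_sweep_uniform_start_lower :
    ∃ C > 0, (∀ n : ℕ, 2 ≤ n →
      ∀ (Ω : Type) (mΩ : MeasurableSpace Ω) (μ : Measure Ω),
        IsProbabilityMeasure μ →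
      ∀ (ξ : ℕ → Ω → Bool), (∀ i, Measurable (ξ i)) →
        iIndepFun ξ μ →
        (∀ i, μ {ω | ξ i ω = true} = 1 / 2) →
      ∀ (K : Ω → ℕ), Measurable K → (∀ ω, K ω < n) →
        (∀ j < n, μ {ω | K ω = j} = (n : ℝ≥0∞)⁻¹) →
        IndepFun K (fun ω => fun i => ξ i ω) μ →
      ∀ (Z : ℕ → Ω → ℤ), (∀ t, Measurable (Z t)) →
        (∀ ω, Z 0 ω = (K ω : ℤ)) →
        (∀ t ω, Z (t + 1) ω =
          if Z t ω = (n : ℤ) - 1 - t then Z t ω - 2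
          else if ξ t ω then Z t ω - 2 else Z t ω) →
      ENNReal.ofReal (((n : ℝ) / 2) * (1 - C * Real.log n / n))
        ≤ ∑' t : ℕ, μ {ω | ∀ s ≤ t, 0 < Z s ω}) ∧
    (∀ (Ω : ℕ → Type) (mΩ : ∀ n, MeasurableSpace (Ω n)) (μ : ∀ n, Measure (Ω n)),
      (∀ n, IsProbabilityMeasure (μ n)) →
      ∀ (ξ : ∀ n, ℕ → Ω n → Bool), (∀ n i, Measurable (ξ n i)) →
        (∀ n, iIndepFun (ξ n) (μ n)) →
        (∀ n i, μ n {ω | ξ n i ω = true} = 1 / 2) →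
      ∀ (K : ∀ n, Ω n → ℕ), (∀ n, Measurable (K n)) → (∀ n, 1 ≤ n → ∀ ω, K n ω < n) →
        (∀ n, 1 ≤ n → ∀ j < n, μ n {ω | K n ω = j} = (n : ℝ≥0∞)⁻¹) →
        (∀ n, IndepFun (K n) (fun ω => fun i => ξ n i ω) (μ n)) →
      ∀ (Z : ∀ n, ℕ → Ω n → ℤ), (∀ n t, Measurable (Z n t)) →
        (∀ n ω, Z n 0 ω = (K n ω : ℤ)) →
        (∀ n t ω, Z n (t + 1) ω =
          if Z n t ω = (n : ℤ) - 1 - t then Z n t ω - 2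
          else if ξ n t ω then Z n t ω - 2 else Z n t ω) →
      Tendsto
        (fun n => (∑' t : ℕ, μ n {ω | ∀ s ≤ t, 0 < Z n s ω}).toReal / ((n : ℝ) / 2))
        atTop (nhds 1)) := by
  refine ⟨8, by norm_num, fun n hn Ω _ μ _ ξ hξ hξi hhalf K hK hKlt hunif hKξ Z _ hZ0 hZ => ?_,
    fun Ω _ μ _ ξ hξ hξi hhalf K hK hKlt hunif hKξ Z _ hZ0 hZ => ?_⟩
  · obtain ⟨hfin, hbound⟩ := IsGapProcess.tsum_ne_top_and_abs_toReal_sub_le ⟨hZ0, hZ⟩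
      hKlt hunif (fairGivenHistory hK hξ hξi hKξ hhalf) hK hξ
    have hn' : (2 : ℝ) ≤ n := by exact_mod_cast hn
    have hlog : 5 / 8 ≤ Real.log n :=
      (by linarith [Real.log_two_gt_d9] : (5 / 8 : ℝ) ≤ Real.log 2).trans
        (Real.log_le_log two_pos hn')
    change _ ≤ ∑' t, μ (survivalSet Z t)
    rw [ENNReal.ofReal_le_iff_le_toReal hfin,
      show (n : ℝ) / 2 * (1 - 8 * Real.log n / n) = n / 2 - 4 * Real.log n by field_simp; ring]
    linarith [(abs_le.1 hbound).1]
  · rw [tendsto_iff_norm_sub_tendsto_zero]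
    refine squeeze_zero' (Eventually.of_forall fun _ => norm_nonneg _) ?_
      (tendsto_const_div_atTop_nhds_zero_nat 5)
    filter_upwards [eventually_ge_atTop 1] with n hn
    have hn' : (0 : ℝ) < n := by exact_mod_cast hn
    obtain ⟨-, hbound⟩ := IsGapProcess.tsum_ne_top_and_abs_toReal_sub_le ⟨hZ0 n, hZ n⟩
      (hKlt n hn) (hunif n hn)
      (fairGivenHistory (hK n) (hξ n) (hξi n) (hKξ n) (hhalf n)) (hK n) (hξ n)
    rw [Real.norm_eq_abs, show ∀ x : ℝ, x / (n / 2) - 1 = (x - n / 2) / (n / 2) by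
      intro x; field_simp, abs_div, abs_of_pos (half_pos hn'), div_le_iff₀ (half_pos hn')]
    exact hbound.trans_eq (by field_simp)
end

section
/- The optimal placement of two points in the unit square $[0,1]^2$ to minimize the average $\ell_1$-distance from a uniformly random point to the nearer of the two points is achieved by $\{(1/2, 1/4), (1/2, 3/4)\}$ (up to symmetry), and the minimum average distance is $3/8$; i.e., $\min_{S \subset [0,1]^2, |S|=2} \int_{[0,1]^2} \min_{s \in S} \|p - s\|_1 \, dp = 3/8$. -/
/-- Average ℓ¹-distance from a uniform point of the unit square to the nearer of `s₁, s₂`. -/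
noncomputable def avgMinDist (s₁ s₂ : ℝ × ℝ) : ℝ :=
  ∫ x in (0:ℝ)..1, ∫ y in (0:ℝ)..1,
    min (|x - s₁.1| + |y - s₁.2|) (|x - s₂.1| + |y - s₂.2|)

open MeasureTheory Set intervalIntegral

lemma integral_poly (α β c0 c1 c2 : ℝ) :
    ∫ x in α..β, (c0 + c1 * x + c2 * x ^ 2) =
      c0 * (β - α) + c1 * ((β ^ 2 - α ^ 2) / 2) + c2 * ((β ^ 3 - α ^ 3) / 3) := by
  rw [intervalIntegral.integral_add
      (Continuous.intervalIntegrable (by fun_prop) _ _)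
      (Continuous.intervalIntegrable (by fun_prop) _ _),
    intervalIntegral.integral_add
      (Continuous.intervalIntegrable (by fun_prop) _ _)
      (Continuous.intervalIntegrable (by fun_prop) _ _),
    intervalIntegral.integral_const, intervalIntegral.integral_const_mul,
    intervalIntegral.integral_const_mul, integral_id, integral_pow]
  push_cast [smul_eq_mul]
  ring

lemma integrable_of_eqOn (f : ℝ → ℝ) {α β : ℝ} (c0 c1 c2 : ℝ) (hαβ : α ≤ β)
    (h : ∀ x ∈ Set.Icc α β, f x = c0 + c1 * x + c2 * x ^ 2) :
    IntervalIntegrable f volume α β := by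
  rw [intervalIntegrable_iff_integrableOn_Icc_of_le hαβ]
  have hg : IntegrableOn (fun x => c0 + c1 * x + c2 * x ^ 2) (Set.Icc α β) volume :=
    (Continuous.integrableOn_Icc (by fun_prop))
  exact hg.congr_fun (fun x hx => (h x hx).symm) measurableSet_Icc

lemma integral_eq_poly (f : ℝ → ℝ) {α β : ℝ} (c0 c1 c2 : ℝ) (hαβ : α ≤ β)
    (h : ∀ x ∈ Set.Icc α β, f x = c0 + c1 * x + c2 * x ^ 2) :
    ∫ x in α..β, f x =
      c0 * (β - α) + c1 * ((β ^ 2 - α ^ 2) / 2) + c2 * ((β ^ 3 - α ^ 3) / 3) := by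
  rw [intervalIntegral.integral_congr (g := fun x => c0 + c1 * x + c2 * x ^ 2)
      (by rw [Set.uIcc_of_le hαβ]; exact h), integral_poly]

lemma inner_left (u v b₁ b₂ : ℝ) (h0 : 0 ≤ b₁) (hb : b₁ ≤ b₂) (h1 : b₂ ≤ 1)
    (h : b₂ - b₁ ≤ v - u) :
    ∫ y in (0:ℝ)..1, min (u + |y - b₁|) (v + |y - b₂|) = u + (b₁ ^ 2 - b₁ + 1 / 2) := by
  have hfml1 : ∀ y ∈ Set.Icc (0:ℝ) b₁,
      (fun y => min (u + |y - b₁|) (v + |y - b₂|)) y = (u + b₁) + (-1) * y + 0 * y ^ 2 := by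
    intro y hy
    have hy1 : y ≤ b₁ := hy.2
    have e1 : |y - b₁| = b₁ - y := by rw [abs_of_nonpos (by linarith)]; ring
    have e2 : |y - b₂| = b₂ - y := by rw [abs_of_nonpos (by linarith)]; ring
    simp only [e1, e2]
    rw [min_eq_left (by linarith)]
    ring
  have hfml2 : ∀ y ∈ Set.Icc b₁ (1:ℝ),
      (fun y => min (u + |y - b₁|) (v + |y - b₂|)) y = (u - b₁) + 1 * y + 0 * y ^ 2 := by
    intro y hy
    have e1 : |y - b₁| = y - b₁ := abs_of_nonneg (by linarith [hy.1])
    have h2 := le_abs_self (y - b₂)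
    simp only [e1]
    rw [min_eq_left (by linarith)]
    ring
  have i1 := integrable_of_eqOn _ _ _ _ h0 hfml1
  have i2 := integrable_of_eqOn _ _ _ _ (hb.trans h1) hfml2
  rw [← integral_add_adjacent_intervals i1 i2, integral_eq_poly _ _ _ _ h0 hfml1,
    integral_eq_poly _ _ _ _ (hb.trans h1) hfml2]
  ring

lemma inner_right (u v b₁ b₂ : ℝ) (h0 : 0 ≤ b₁) (hb : b₁ ≤ b₂) (h1 : b₂ ≤ 1)
    (h : v - u ≤ b₁ - b₂) :
    ∫ y in (0:ℝ)..1, min (u + |y - b₁|) (v + |y - b₂|) = v + (b₂ ^ 2 - b₂ + 1 / 2) := by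
  have hfml1 : ∀ y ∈ Set.Icc (0:ℝ) b₂,
      (fun y => min (u + |y - b₁|) (v + |y - b₂|)) y = (v + b₂) + (-1) * y + 0 * y ^ 2 := by
    intro y hy
    have hy1 : y ≤ b₂ := hy.2
    have e2 : |y - b₂| = b₂ - y := by rw [abs_of_nonpos (by linarith)]; ring
    have h2 := le_abs_self (y - b₁)
    have h3 := neg_abs_le (y - b₁)
    simp only [e2]
    rw [min_eq_right (by cases abs_cases (y - b₁) with
      | inl hc => linarith [hc.1] | inr hc => linarith [hc.1])]
    ring
  have hfml2 : ∀ y ∈ Set.Icc b₂ (1:ℝ),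
      (fun y => min (u + |y - b₁|) (v + |y - b₂|)) y = (v - b₂) + 1 * y + 0 * y ^ 2 := by
    intro y hy
    have e2 : |y - b₂| = y - b₂ := abs_of_nonneg (by linarith [hy.1])
    have h2 := le_abs_self (y - b₁)
    simp only [e2]
    rw [min_eq_right (by linarith)]
    ring
  have i1 := integrable_of_eqOn _ _ _ _ (h0.trans hb) hfml1
  have i2 := integrable_of_eqOn _ _ _ _ h1 hfml2
  rw [← integral_add_adjacent_intervals i1 i2, integral_eq_poly _ _ _ _ (h0.trans hb) hfml1,
    integral_eq_poly _ _ _ _ h1 hfml2]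
  ring

lemma inner_mid (u v b₁ b₂ : ℝ) (h0 : 0 ≤ b₁) (hb : b₁ ≤ b₂) (h1 : b₂ ≤ 1)
    (hl : b₁ - b₂ ≤ v - u) (hr : v - u ≤ b₂ - b₁) :
    ∫ y in (0:ℝ)..1, min (u + |y - b₁|) (v + |y - b₂|) =
      u + (-(v - u) ^ 2 / 4 + (1 - (b₁ + b₂) / 2) * (v - u)
        + (b₁ ^ 2 + (1 - b₂) ^ 2) / 2 + (b₂ - b₁) ^ 2 / 4) := by
  set t : ℝ := (b₁ + b₂ + (v - u)) / 2 with ht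
  have ht1 : b₁ ≤ t := by rw [ht]; linarith
  have ht2 : t ≤ b₂ := by rw [ht]; linarith
  have hfml1 : ∀ y ∈ Set.Icc (0:ℝ) b₁,
      (fun y => min (u + |y - b₁|) (v + |y - b₂|)) y = (u + b₁) + (-1) * y + 0 * y ^ 2 := by
    intro y hy
    have e1 : |y - b₁| = b₁ - y := by rw [abs_of_nonpos (by linarith [hy.2])]; ring
    have e2 : |y - b₂| = b₂ - y := by rw [abs_of_nonpos (by linarith [hy.2])]; ring
    simp only [e1, e2]
    rw [min_eq_left (by linarith)]
    ring
  have hfml2 : ∀ y ∈ Set.Icc b₁ t,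
      (fun y => min (u + |y - b₁|) (v + |y - b₂|)) y = (u - b₁) + 1 * y + 0 * y ^ 2 := by
    intro y hy
    have e1 : |y - b₁| = y - b₁ := abs_of_nonneg (by linarith [hy.1])
    have e2 : |y - b₂| = b₂ - y := by rw [abs_of_nonpos (by linarith [hy.2])]; ring
    simp only [e1, e2]
    rw [min_eq_left (by rw [ht] at hy; linarith [hy.2])]
    ring
  have hfml3 : ∀ y ∈ Set.Icc t b₂,
      (fun y => min (u + |y - b₁|) (v + |y - b₂|)) y = (v + b₂) + (-1) * y + 0 * y ^ 2 := by
    intro y hy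
    have e1 : |y - b₁| = y - b₁ := abs_of_nonneg (by linarith [hy.1])
    have e2 : |y - b₂| = b₂ - y := by rw [abs_of_nonpos (by linarith [hy.2])]; ring
    simp only [e1, e2]
    rw [min_eq_right (by rw [ht] at hy; linarith [hy.1])]
    ring
  have hfml4 : ∀ y ∈ Set.Icc b₂ (1:ℝ),
      (fun y => min (u + |y - b₁|) (v + |y - b₂|)) y = (v - b₂) + 1 * y + 0 * y ^ 2 := by
    intro y hy
    have e1 : |y - b₁| = y - b₁ := abs_of_nonneg (by linarith [hy.1])
    have e2 : |y - b₂| = y - b₂ := abs_of_nonneg (by linarith [hy.1])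
    simp only [e1, e2]
    rw [min_eq_right (by linarith)]
    ring
  have i1 := integrable_of_eqOn _ _ _ _ h0 hfml1
  have i2 := integrable_of_eqOn _ _ _ _ ht1 hfml2
  have i3 := integrable_of_eqOn _ _ _ _ ht2 hfml3
  have i4 := integrable_of_eqOn _ _ _ _ h1 hfml4
  rw [← integral_add_adjacent_intervals i1 ((i2.trans i3).trans i4),
    ← integral_add_adjacent_intervals i2 (i3.trans i4),
    ← integral_add_adjacent_intervals i3 i4,
    integral_eq_poly _ _ _ _ h0 hfml1, integral_eq_poly _ _ _ _ ht1 hfml2,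
    integral_eq_poly _ _ _ _ ht2 hfml3, integral_eq_poly _ _ _ _ h1 hfml4, ht]
  ring

lemma caseA (a₁ a₂ b₁ b₂ : ℝ) (ha0 : 0 ≤ a₁) (ha : a₁ ≤ a₂) (ha1 : a₂ ≤ 1)
    (hb0 : 0 ≤ b₁) (hb : b₁ ≤ b₂) (hb1 : b₂ ≤ 1) (hw : a₂ - a₁ ≤ b₂ - b₁) :
    3 / 8 ≤ avgMinDist (a₁, b₁) (a₂, b₂) := by
  show 3 / 8 ≤ ∫ x in (0:ℝ)..1, ∫ y in (0:ℝ)..1,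
    min (|x - a₁| + |y - b₁|) (|x - a₂| + |y - b₂|)
  have hf1 : ∀ x ∈ Set.Icc (0:ℝ) a₁,
      (fun x => ∫ y in (0:ℝ)..1, min (|x - a₁| + |y - b₁|) (|x - a₂| + |y - b₂|)) x
      = ((1/2:ℝ) + (-1:ℝ)*b₂ + (3/4:ℝ)*b₂^2 + (-1/2:ℝ)*b₁*b₂ + (3/4:ℝ)*b₁^2 + a₂ + (-1/2:ℝ)*a₂*b₂ + (-1/2:ℝ)*a₂*b₁ + (-1/4:ℝ)*a₂^2 + (1/2:ℝ)*a₁*b₂ + (1/2:ℝ)*a₁*b₁ + (1/2:ℝ)*a₁*a₂ + (-1/4:ℝ)*a₁^2)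
        + (-1) * x + 0 * x ^ 2 := by
    intro x hx
    have e1 : |x - a₁| = a₁ - x := by rw [abs_of_nonpos (by linarith [hx.2])]; ring
    have e2 : |x - a₂| = a₂ - x := by rw [abs_of_nonpos (by linarith [hx.2])]; ring
    simp only [e1, e2]
    rw [inner_mid (a₁ - x) (a₂ - x) b₁ b₂ hb0 hb hb1 (by linarith) (by linarith)]
    ring
  have hf2 : ∀ x ∈ Set.Icc a₁ a₂,
      (fun x => ∫ y in (0:ℝ)..1, min (|x - a₁| + |y - b₁|) (|x - a₂| + |y - b₂|)) x
      = ((1/2:ℝ) + (-1:ℝ)*b₂ + (3/4:ℝ)*b₂^2 + (-1/2:ℝ)*b₁*b₂ + (3/4:ℝ)*b₁^2 + a₂ + (-1/2:ℝ)*a₂*b₂ + (-1/2:ℝ)*a₂*b₁ + (-1/4:ℝ)*a₂^2 + (-1/2:ℝ)*a₁*b₂ + (-1/2:ℝ)*a₁*b₁ + (-1/2:ℝ)*a₁*a₂ + (-1/4:ℝ)*a₁^2)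
        + ((-1:ℝ) + b₂ + b₁ + a₂ + a₁) * x + (-1) * x ^ 2 := by
    intro x hx
    have e1 : |x - a₁| = x - a₁ := abs_of_nonneg (by linarith [hx.1])
    have e2 : |x - a₂| = a₂ - x := by rw [abs_of_nonpos (by linarith [hx.2])]; ring
    simp only [e1, e2]
    rw [inner_mid (x - a₁) (a₂ - x) b₁ b₂ hb0 hb hb1 (by linarith [hx.2]) (by linarith [hx.1])]
    ring
  have hf3 : ∀ x ∈ Set.Icc a₂ (1:ℝ),
      (fun x => ∫ y in (0:ℝ)..1, min (|x - a₁| + |y - b₁|) (|x - a₂| + |y - b₂|)) x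
      = ((1/2:ℝ) + (-1:ℝ)*b₂ + (3/4:ℝ)*b₂^2 + (-1/2:ℝ)*b₁*b₂ + (3/4:ℝ)*b₁^2 + (-1:ℝ)*a₂ + (1/2:ℝ)*a₂*b₂ + (1/2:ℝ)*a₂*b₁ + (-1/4:ℝ)*a₂^2 + (-1/2:ℝ)*a₁*b₂ + (-1/2:ℝ)*a₁*b₁ + (1/2:ℝ)*a₁*a₂ + (-1/4:ℝ)*a₁^2)
        + 1 * x + 0 * x ^ 2 := by
    intro x hx
    have e1 : |x - a₁| = x - a₁ := abs_of_nonneg (by linarith [hx.1])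
    have e2 : |x - a₂| = x - a₂ := abs_of_nonneg (by linarith [hx.1])
    simp only [e1, e2]
    rw [inner_mid (x - a₁) (x - a₂) b₁ b₂ hb0 hb hb1 (by linarith) (by linarith)]
    ring
  have i1 := integrable_of_eqOn _ _ _ _ ha0 hf1
  have i2 := integrable_of_eqOn _ _ _ _ ha hf2
  have i3 := integrable_of_eqOn _ _ _ _ ha1 hf3
  rw [← integral_add_adjacent_intervals i1 (i2.trans i3),
    ← integral_add_adjacent_intervals i2 i3,
    integral_eq_poly _ _ _ _ ha0 hf1, integral_eq_poly _ _ _ _ ha hf2,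
    integral_eq_poly _ _ _ _ ha1 hf3]
  nlinarith [sq_nonneg (2*a₁ - 1 + (a₂-a₁)*(2-b₁-b₂)),
    mul_nonneg (mul_nonneg (by linarith : (0:ℝ) ≤ 1-(a₂-a₁)) (by linarith : (0:ℝ) ≤ 1+(a₂-a₁))) (sq_nonneg (b₁+b₂-1)),
    sq_nonneg (2*(b₂-b₁)-1),
    mul_nonneg (mul_nonneg (by linarith : (0:ℝ) ≤ a₂-a₁) (by linarith : (0:ℝ) ≤ a₂-a₁)) (by linarith : (0:ℝ) ≤ a₂-a₁)]

lemma caseB (a₁ a₂ b₁ b₂ : ℝ) (ha0 : 0 ≤ a₁) (ha : a₁ ≤ a₂) (ha1 : a₂ ≤ 1)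
    (hb0 : 0 ≤ b₁) (hb : b₁ ≤ b₂) (hb1 : b₂ ≤ 1) (hw : b₂ - b₁ ≤ a₂ - a₁) :
    3 / 8 ≤ avgMinDist (a₁, b₁) (a₂, b₂) := by
  show 3 / 8 ≤ ∫ x in (0:ℝ)..1, ∫ y in (0:ℝ)..1,
    min (|x - a₁| + |y - b₁|) (|x - a₂| + |y - b₂|)
  have hx1 : a₁ ≤ (a₁ + a₂ - (b₂ - b₁))/2 := by linarith
  have hx12 : (a₁ + a₂ - (b₂ - b₁))/2 ≤ (a₁ + a₂ + (b₂ - b₁))/2 := by linarith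
  have hx2 : (a₁ + a₂ + (b₂ - b₁))/2 ≤ a₂ := by linarith
  have hf1 : ∀ x ∈ Set.Icc (0:ℝ) a₁,
      (fun x => ∫ y in (0:ℝ)..1, min (|x - a₁| + |y - b₁|) (|x - a₂| + |y - b₂|)) x
      = ((1/2:ℝ) + (-1:ℝ)*b₁ + b₁^2 + a₁) + (-1) * x + 0 * x ^ 2 := by
    intro x hx
    have e1 : |x - a₁| = a₁ - x := by rw [abs_of_nonpos (by linarith [hx.2])]; ring
    have e2 : |x - a₂| = a₂ - x := by rw [abs_of_nonpos (by linarith [hx.2])]; ring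
    simp only [e1, e2]
    rw [inner_left (a₁ - x) (a₂ - x) b₁ b₂ hb0 hb hb1 (by linarith)]
    ring
  have hf2 : ∀ x ∈ Set.Icc a₁ ((a₁ + a₂ - (b₂ - b₁))/2),
      (fun x => ∫ y in (0:ℝ)..1, min (|x - a₁| + |y - b₁|) (|x - a₂| + |y - b₂|)) x
      = ((1/2:ℝ) + (-1:ℝ)*b₁ + b₁^2 + (-1:ℝ)*a₁) + 1 * x + 0 * x ^ 2 := by
    intro x hx
    have e1 : |x - a₁| = x - a₁ := abs_of_nonneg (by linarith [hx.1])
    have e2 : |x - a₂| = a₂ - x := by rw [abs_of_nonpos (by linarith [hx.2])]; ring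
    simp only [e1, e2]
    rw [inner_left (x - a₁) (a₂ - x) b₁ b₂ hb0 hb hb1 (by linarith [hx.2])]
    ring
  have hf3 : ∀ x ∈ Set.Icc ((a₁ + a₂ - (b₂ - b₁))/2) ((a₁ + a₂ + (b₂ - b₁))/2),
      (fun x => ∫ y in (0:ℝ)..1, min (|x - a₁| + |y - b₁|) (|x - a₂| + |y - b₂|)) x
      = ((1/2:ℝ) + (-1:ℝ)*b₂ + (3/4:ℝ)*b₂^2 + (-1/2:ℝ)*b₁*b₂ + (3/4:ℝ)*b₁^2 + a₂ + (-1/2:ℝ)*a₂*b₂ + (-1/2:ℝ)*a₂*b₁ + (-1/4:ℝ)*a₂^2 + (-1/2:ℝ)*a₁*b₂ + (-1/2:ℝ)*a₁*b₁ + (-1/2:ℝ)*a₁*a₂ + (-1/4:ℝ)*a₁^2)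
        + ((-1:ℝ) + b₂ + b₁ + a₂ + a₁) * x + (-1) * x ^ 2 := by
    intro x hx
    have e1 : |x - a₁| = x - a₁ := abs_of_nonneg (by linarith [hx.1])
    have e2 : |x - a₂| = a₂ - x := by rw [abs_of_nonpos (by linarith [hx.2])]; ring
    simp only [e1, e2]
    rw [inner_mid (x - a₁) (a₂ - x) b₁ b₂ hb0 hb hb1 (by linarith [hx.2]) (by linarith [hx.1])]
    ring
  have hf4 : ∀ x ∈ Set.Icc ((a₁ + a₂ + (b₂ - b₁))/2) a₂,
      (fun x => ∫ y in (0:ℝ)..1, min (|x - a₁| + |y - b₁|) (|x - a₂| + |y - b₂|)) x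
      = ((1/2:ℝ) + (-1:ℝ)*b₂ + b₂^2 + a₂) + (-1) * x + 0 * x ^ 2 := by
    intro x hx
    have e1 : |x - a₁| = x - a₁ := abs_of_nonneg (by linarith [hx.1])
    have e2 : |x - a₂| = a₂ - x := by rw [abs_of_nonpos (by linarith [hx.2])]; ring
    simp only [e1, e2]
    rw [inner_right (x - a₁) (a₂ - x) b₁ b₂ hb0 hb hb1 (by linarith [hx.1])]
    ring
  have hf5 : ∀ x ∈ Set.Icc a₂ (1:ℝ),
      (fun x => ∫ y in (0:ℝ)..1, min (|x - a₁| + |y - b₁|) (|x - a₂| + |y - b₂|)) x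
      = ((1/2:ℝ) + (-1:ℝ)*b₂ + b₂^2 + (-1:ℝ)*a₂) + 1 * x + 0 * x ^ 2 := by
    intro x hx
    have e1 : |x - a₁| = x - a₁ := abs_of_nonneg (by linarith [hx.1])
    have e2 : |x - a₂| = x - a₂ := abs_of_nonneg (by linarith [hx.1])
    simp only [e1, e2]
    rw [inner_right (x - a₁) (x - a₂) b₁ b₂ hb0 hb hb1 (by linarith)]
    ring
  have i1 := integrable_of_eqOn _ _ _ _ ha0 hf1
  have i2 := integrable_of_eqOn _ _ _ _ hx1 hf2
  have i3 := integrable_of_eqOn _ _ _ _ hx12 hf3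
  have i4 := integrable_of_eqOn _ _ _ _ hx2 hf4
  have i5 := integrable_of_eqOn _ _ _ _ ha1 hf5
  rw [← integral_add_adjacent_intervals i1 (i2.trans ((i3.trans i4).trans i5)),
    ← integral_add_adjacent_intervals i2 ((i3.trans i4).trans i5),
    ← integral_add_adjacent_intervals i3 (i4.trans i5),
    ← integral_add_adjacent_intervals i4 i5,
    integral_eq_poly _ _ _ _ ha0 hf1, integral_eq_poly _ _ _ _ hx1 hf2,
    integral_eq_poly _ _ _ _ hx12 hf3, integral_eq_poly _ _ _ _ hx2 hf4,
    integral_eq_poly _ _ _ _ ha1 hf5]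
  nlinarith [sq_nonneg (2*a₁ - 1 + (b₂-b₁)*(1-b₁-b₂) + (a₂-a₁)),
    mul_nonneg (mul_nonneg (by linarith : (0:ℝ) ≤ 1-(b₂-b₁)) (by linarith : (0:ℝ) ≤ 1+(b₂-b₁))) (sq_nonneg (b₁+b₂-1)),
    sq_nonneg (2*(a₂-a₁)-1),
    mul_nonneg (mul_nonneg (by linarith : (0:ℝ) ≤ b₂-b₁) (by linarith : (0:ℝ) ≤ b₂-b₁)) (by linarith : (0:ℝ) ≤ b₂-b₁)]

lemma swap (s₁ s₂ : ℝ × ℝ) : avgMinDist s₁ s₂ = avgMinDist s₂ s₁ := by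
  unfold avgMinDist
  simp only [min_comm]

lemma avgFlip (a₁ b₁ a₂ b₂ : ℝ) :
    avgMinDist (a₁, b₁) (a₂, b₂) = avgMinDist (1 - a₁, b₁) (1 - a₂, b₂) := by
  show (∫ x in (0:ℝ)..1, ∫ y in (0:ℝ)..1, min (|x - a₁| + |y - b₁|) (|x - a₂| + |y - b₂|))
     = ∫ x in (0:ℝ)..1, ∫ y in (0:ℝ)..1, min (|x - (1-a₁)| + |y - b₁|) (|x - (1-a₂)| + |y - b₂|)
  have h := intervalIntegral.integral_comp_sub_left (a := 0) (b := 1)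
    (fun x => ∫ y in (0:ℝ)..1, min (|x - (1-a₁)| + |y - b₁|) (|x - (1-a₂)| + |y - b₂|)) 1
  norm_num at h
  rw [← h]
  apply intervalIntegral.integral_congr
  intro x _
  simp only
  rw [abs_sub_comm a₁ x, abs_sub_comm a₂ x]

lemma keyLemma (a₁ a₂ b₁ b₂ : ℝ) (ha10 : 0 ≤ a₁) (ha11 : a₁ ≤ 1) (ha20 : 0 ≤ a₂)
    (ha21 : a₂ ≤ 1) (hb0 : 0 ≤ b₁) (hb : b₁ ≤ b₂) (hb1 : b₂ ≤ 1) :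
    3 / 8 ≤ avgMinDist (a₁, b₁) (a₂, b₂) := by
  rcases le_total a₁ a₂ with h | h
  · rcases le_total (a₂ - a₁) (b₂ - b₁) with h' | h'
    · exact caseA a₁ a₂ b₁ b₂ ha10 h ha21 hb0 hb hb1 h'
    · exact caseB a₁ a₂ b₁ b₂ ha10 h ha21 hb0 hb hb1 h'
  · rw [avgFlip]
    rcases le_total ((1 - a₂) - (1 - a₁)) (b₂ - b₁) with h' | h'
    · exact caseA (1 - a₁) (1 - a₂) b₁ b₂ (by linarith) (by linarith) (by linarith)
        hb0 hb hb1 h'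
    · exact caseB (1 - a₁) (1 - a₂) b₁ b₂ (by linarith) (by linarith) (by linarith)
        hb0 hb hb1 h'

lemma value : avgMinDist (1/2, 1/4) (1/2, 3/4) = 3/8 := by
  show (∫ x in (0:ℝ)..1, ∫ y in (0:ℝ)..1,
      min (|x - 1/2| + |y - 1/4|) (|x - 1/2| + |y - 3/4|)) = 3/8
  have hh : (0:ℝ) ≤ 1/2 := by norm_num
  have hh2 : (1/2:ℝ) ≤ 1 := by norm_num
  have hf1 : ∀ x ∈ Set.Icc (0:ℝ) (1/2),
      (fun x => ∫ y in (0:ℝ)..1, min (|x - 1/2| + |y - 1/4|) (|x - 1/2| + |y - 3/4|)) x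
      = (5/8:ℝ) + (-1) * x + 0 * x ^ 2 := by
    intro x hx
    have e1 : |x - 1/2| = 1/2 - x := by rw [abs_of_nonpos (by linarith [hx.2])]; ring
    simp only [e1]
    rw [inner_mid (1/2 - x) (1/2 - x) (1/4) (3/4) (by norm_num) (by norm_num) (by norm_num)
      (by norm_num) (by norm_num)]
    ring
  have hf2 : ∀ x ∈ Set.Icc (1/2:ℝ) 1,
      (fun x => ∫ y in (0:ℝ)..1, min (|x - 1/2| + |y - 1/4|) (|x - 1/2| + |y - 3/4|)) x
      = (-3/8:ℝ) + 1 * x + 0 * x ^ 2 := by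
    intro x hx
    have e1 : |x - 1/2| = x - 1/2 := abs_of_nonneg (by linarith [hx.1])
    simp only [e1]
    rw [inner_mid (x - 1/2) (x - 1/2) (1/4) (3/4) (by norm_num) (by norm_num) (by norm_num)
      (by norm_num) (by norm_num)]
    ring
  have i1 := integrable_of_eqOn _ _ _ _ hh hf1
  have i2 := integrable_of_eqOn _ _ _ _ hh2 hf2
  rw [← integral_add_adjacent_intervals i1 i2,
    integral_eq_poly _ _ _ _ hh hf1, integral_eq_poly _ _ _ _ hh2 hf2]
  norm_num

/-- the optimal placement of two points in the unit square minimizing the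
average ℓ¹-distance from a uniformly random point to the nearer of the two points achieves
average distance `3/8`, attained at `{(1/2, 1/4), (1/2, 3/4)}`. -/
theorem avgMinDist_min :
    avgMinDist (1/2, 1/4) (1/2, 3/4) = 3/8 ∧
      ∀ s₁ s₂ : ℝ × ℝ, s₁ ∈ Set.Icc (0:ℝ) 1 ×ˢ Set.Icc (0:ℝ) 1 →
        s₂ ∈ Set.Icc (0:ℝ) 1 ×ˢ Set.Icc (0:ℝ) 1 →
        3/8 ≤ avgMinDist s₁ s₂ := by
  refine ⟨value, ?_⟩
  rintro ⟨a₁, b₁⟩ ⟨a₂, b₂⟩ h₁ h₂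
  simp only [Set.mem_prod, Set.mem_Icc] at h₁ h₂
  rcases le_total b₁ b₂ with h | h
  · exact keyLemma a₁ a₂ b₁ b₂ h₁.1.1 h₁.1.2 h₂.1.1 h₂.1.2 h₁.2.1 h h₂.2.2
  · rw [swap]
    exact keyLemma a₂ a₁ b₂ b₁ h₂.1.1 h₂.1.2 h₁.1.1 h₁.1.2 h₂.2.1 h h₁.2.2
end
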